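/- Let p ∈ ℤ[t,t⁻¹] be a Laurent polynomial with integer coefficients such that p(t) = p(t⁻¹) (p is invariant under the involution t ↦ t⁻¹) and p(1) = 0. Then there exist an integer k ≥ 1 and integers b₁, …, b_k such that p(t) = Σ_{i=1}^{k} b_i · (tⁱ − t^{i−1} − t^{−(i−1)} + t^{−i}). -/

import Mathlib

/-!
The elements `tⁱ - t^{i-1} - t^{-(i-1)} + t^{-i}` telescope: their sum over `1 ≤ i ≤ j` is
`t^j + t^{-j} - 2`. For a symmetric `p` whose coefficients vanish beyond `|n| = N`, subtracting
`a_N (t^N + t^{-N} - 2)` kills both extreme coefficients while preserving symmetry and the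
vanishing at `t = 1`, so induction on `N` ends at a constant which must be `p(1) = 0`.
-/

open LaurentPolynomial Submodule

namespace LaurentPolynomial

variable {R : Type*} [CommRing R]

noncomputable def symmStep (i : ℕ) : R[T;T⁻¹] :=
  T (i : ℤ) - T ((i : ℤ) - 1) - T (-((i : ℤ) - 1)) + T (-(i : ℤ))

noncomputable def symmPair (j : ℕ) : R[T;T⁻¹] :=
  T (j : ℤ) + T (-(j : ℤ)) - 2

theorem sum_symmStep (j : ℕ) : ∑ i ∈ Finset.Icc 1 j, symmStep i = (symmPair j : R[T;T⁻¹]) := by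
  induction j with
  | zero => simp [symmPair, T_zero, one_add_one_eq_two]
  | succ j ih =>
    rw [Finset.sum_Icc_succ_top (by omega), ih, symmPair, symmPair, symmStep]
    push_cast
    ring_nf

theorem symmPair_mem_span (j : ℕ) :
    (symmPair j : R[T;T⁻¹]) ∈ span R (symmStep '' ↑(Finset.Icc 1 j)) :=
  sum_symmStep (R := R) j ▸ sum_mem fun i hi => subset_span ⟨i, hi, rfl⟩

theorem coeff_symmPair {n : ℤ} (hn : n ≠ 0) (j : ℕ) :
    (symmPair j : R[T;T⁻¹]).coeff n = if n.natAbs = j then 1 else 0 := by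
  rw [symmPair, ← map_ofNat C 2]
  simp only [AddMonoidAlgebra.coeff_sub, AddMonoidAlgebra.coeff_add, Finsupp.sub_apply,
    Finsupp.add_apply, T_apply, C_apply, if_neg hn, sub_zero]
  split_ifs <;> first | omega | simp

theorem invert_symmPair (j : ℕ) : invert (symmPair j : R[T;T⁻¹]) = symmPair j := by
  simp [symmPair, map_ofNat, add_comm]

theorem eval₂_one_symmPair (j : ℕ) : eval₂ (RingHom.id R) 1 (symmPair j) = 0 := by
  simp [symmPair, map_ofNat, one_add_one_eq_two]

theorem coeff_natAbs_of_invert_eq {p : R[T;T⁻¹]} (h : invert p = p) (n : ℤ) :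
    p.coeff n.natAbs = p.coeff n := by
  rcases Int.natAbs_eq n with hn | hn
  · rw [← hn]
  · calc p.coeff n.natAbs = (invert p).coeff n.natAbs := by rw [h]
      _ = p.coeff n := by rw [invert_apply, ← hn]

theorem eq_C_coeff_zero {p : R[T;T⁻¹]} (h : ∀ n ≠ 0, p.coeff n = 0) : p = C (p.coeff 0) := by
  ext n
  rcases eq_or_ne n 0 with rfl | hn
  · simp
  · simp [hn, h n hn]

theorem exists_coeff_eq_zero_of_lt_natAbs (p : R[T;T⁻¹]) :
    ∃ N ≥ 1, ∀ n : ℤ, N < n.natAbs → p.coeff n = 0 := by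
  refine ⟨max 1 (p.coeff.support.sup Int.natAbs), le_max_left _ _, fun n hn => ?_⟩
  by_contra h
  have := Finset.le_sup (f := Int.natAbs) (Finsupp.mem_support_iff.mpr h)
  omega

theorem mem_span_symmStep_of_invert_eq {p : R[T;T⁻¹]} (hsym : invert p = p)
    (hev : eval₂ (RingHom.id R) 1 p = 0) {N : ℕ} (hN : ∀ n : ℤ, N < n.natAbs → p.coeff n = 0) :
    p ∈ span R (symmStep '' ↑(Finset.Icc 1 N)) := by
  induction N generalizing p with
  | zero =>
    have hC := eq_C_coeff_zero fun n hn => hN n (by omega)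
    rw [hC, eval₂_C, RingHom.id_apply] at hev
    rw [hC, hev, map_zero]
    exact zero_mem _
  | succ N ih =>
    set c := p.coeff ((N + 1 : ℕ) : ℤ)
    have hrest : p - c • symmPair (N + 1) ∈ span R (symmStep '' ↑(Finset.Icc 1 N)) := by
      refine ih (by rw [map_sub, map_smul, hsym, invert_symmPair])
        (by rw [map_sub, smul_eq_C_mul, map_mul, hev, eval₂_one_symmPair, mul_zero, sub_zero])
        fun n hn => ?_
      rw [AddMonoidAlgebra.coeff_sub, AddMonoidAlgebra.coeff_smul, Finsupp.sub_apply,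
        Finsupp.smul_apply, coeff_symmPair (by omega), smul_eq_mul]
      rcases (show n.natAbs = N + 1 ∨ N + 1 < n.natAbs by omega) with h | h
      · rw [if_pos h, mul_one, ← coeff_natAbs_of_invert_eq hsym, h, sub_self]
      · rw [hN n h, if_neg (by omega), mul_zero, sub_zero]
    have hmono : span R (symmStep (R := R) '' ↑(Finset.Icc 1 N)) ≤
        span R (symmStep '' ↑(Finset.Icc 1 (N + 1))) :=
      span_mono (Set.image_mono (Finset.coe_subset.mpr (Finset.Icc_subset_Icc_right N.le_succ)))
    simpa using add_mem (hmono hrest) (smul_mem _ c (symmPair_mem_span (R := R) (N + 1)))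

end LaurentPolynomial

/-- If `p ∈ ℤ[t,t⁻¹]` satisfies `p(t) = p(t⁻¹)` and `p(1) = 0` (where evaluation at `t = 1`
is the ring homomorphism `ε` with `ε(t) = 1`), then
`p(t) = ∑_{i=1}^{k} bᵢ (tⁱ - t^{i-1} - t^{-(i-1)} + t^{-i})` for some `k ≥ 1` and
integers `b₁, …, b_k`. -/
theorem symmetric_vanishing_at_one_decomposition
    (p : LaurentPolynomial ℤ)
    (hsym : invert p = p)
    (hone : ∀ ε : LaurentPolynomial ℤ →+* ℤ, ε (T 1) = 1 → ε p = 0) :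
    ∃ k : ℕ, 1 ≤ k ∧ ∃ b : ℕ → ℤ,
      p = ∑ i ∈ Finset.Icc 1 k,
        b i • (T (i : ℤ) - T ((i : ℤ) - 1) - T (-((i : ℤ) - 1)) + T (-(i : ℤ))) := by
  obtain ⟨N, hN, hbound⟩ := exists_coeff_eq_zero_of_lt_natAbs p
  have hp := mem_span_symmStep_of_invert_eq hsym (hone _ (by simp)) hbound
  rw [mem_span_image_finset_iff_exists_fun'] at hp
  obtain ⟨b, hb⟩ := hp
  exact ⟨N, hN, b, hb.symm⟩
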